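/- arXiv:1304.7587 — 2 statements merged into one kernel-verified Lean document; each statement's English description precedes it below -/
import Mathlib

section
/- Let d, n, s be integers with d ≥ 4, n ≥ 6d² − 16d + 13 and 1 ≤ s ≤ d − 1. Then every complex number z with Re(z) ≥ 1 satisfies |f_{n,s}(z)| / |f_{n,0}(z)| < 2^s / (3^s · s!). (Here f_{n,0}(z) ≠ 0 since each factor d·z + j with 1 ≤ j ≤ n−1 has real part at least d + 1 > 0.) -/
/-- `f_{n,s}(z) = C(n,s) · ∏_{j=1}^{n−1} ((d−s)·z + j − s)`. -/
noncomputable def hyperF (d n s : ℕ) (z : ℂ) : ℂ :=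
  (n.choose s : ℂ) * ∏ j ∈ Finset.Icc 1 (n - 1), (((d : ℂ) - (s : ℂ)) * z + (j : ℂ) - (s : ℂ))

/-!
For `Re z ≥ 1` the `j`-th factor of `f_{n,s}(z)` is at most `c_j · ‖d z + j‖` in norm, by comparing
real and imaginary parts separately, where `c_j = 1` for `j < s`, `c_j = (d - s)/d` for
`s ≤ j < d` and `c_j = (d + j - 2s)/(d + j)` for `j ≥ d`. With `t = d - s` and `m = n - d` the
product of the `c_j` is `(t/d)^t · (2t)^(m) / (2d)^(m)` (rising factorials), so the claim becomes
`3^s · n(n-1)⋯(n-s+1) · t^t · (2t)^(m) < 2^s · d^t · (2d)^(m)`. For fixed `d` this goes by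
induction on `s`: both sides agree at `s = 0`, and going from `(s, t + 1)` to `(s + 1, t)` multiplies
the left side by less than the right side, by `(1 + 1/t)^t ≥ 2` and `n ≥ 6d² - 16d + 13`.
-/

open Finset

lemma norm_le_mul_norm_of_abs_re_le_of_abs_im_le {w v : ℂ} {c : ℝ} (hc : 0 ≤ c)
    (hre : |w.re| ≤ c * |v.re|) (him : |w.im| ≤ c * |v.im|) : ‖w‖ ≤ c * ‖v‖ := by
  refine (pow_le_pow_iff_left₀ (norm_nonneg w) (by positivity) two_ne_zero).1 ?_
  have hre2 := pow_le_pow_left₀ (abs_nonneg _) hre 2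
  have him2 := pow_le_pow_left₀ (abs_nonneg _) him 2
  rw [mul_pow, sq_abs, sq_abs] at hre2 him2
  rw [mul_pow, Complex.sq_norm, Complex.sq_norm, Complex.normSq_apply, Complex.normSq_apply]
  nlinarith

lemma norm_affine_le {a b A B c : ℝ} {z : ℂ} (hc : 0 ≤ c)
    (hre : |a * z.re + b| ≤ c * (A * z.re + B)) (him : |a| ≤ c * |A|) :
    ‖(a : ℂ) * z + b‖ ≤ c * ‖(A : ℂ) * z + B‖ := by
  apply norm_le_mul_norm_of_abs_re_le_of_abs_im_le hc
  · simp only [Complex.add_re, Complex.re_ofReal_mul, Complex.ofReal_re]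
    exact hre.trans (by gcongr; exact le_abs_self _)
  · simp only [Complex.add_im, Complex.im_ofReal_mul, Complex.ofReal_im, add_zero, abs_mul]
    rw [← mul_assoc]
    gcongr

noncomputable def factorBound (d s j : ℕ) : ℝ :=
  if j < s then 1 else if j < d then ((d : ℝ) - s) / d else ((d : ℝ) + j - 2 * s) / (d + j)

lemma norm_factor_le {d s j : ℕ} {z : ℂ} (hz : 1 ≤ z.re) (hd : 0 < d) (hsd : s ≤ d) :
    ‖((d : ℂ) - s) * z + j - s‖ ≤ factorBound d s j * ‖(d : ℂ) * z + j‖ := by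
  have hd' : (0 : ℝ) < d := by exact_mod_cast hd
  have hsd' : (s : ℝ) ≤ d := by exact_mod_cast hsd
  rw [show ((d : ℂ) - s) * z + j - s = (((d : ℝ) - s : ℝ) : ℂ) * z + ((j - s : ℝ) : ℂ) by
      push_cast; ring,
    show (d : ℂ) * z + j = ((d : ℝ) : ℂ) * z + ((j : ℝ) : ℂ) by push_cast; ring]
  unfold factorBound
  split_ifs with hjs hjd
  · apply norm_affine_le zero_le_one
    · rw [abs_le]; constructor <;> nlinarith
    · rw [abs_of_nonneg (by linarith), abs_of_nonneg hd'.le]; linarith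
  · have hsj : (s : ℝ) ≤ j := by exact_mod_cast not_lt.1 hjs
    have hjd' : (j : ℝ) ≤ d := by exact_mod_cast hjd.le
    apply norm_affine_le (by positivity)
    · rw [abs_of_nonneg (by nlinarith), div_mul_eq_mul_div, le_div_iff₀ hd']
      nlinarith
    · rw [abs_of_nonneg (by linarith), abs_of_nonneg hd'.le, div_mul_cancel₀ _ hd'.ne']
  · have hsj : (s : ℝ) ≤ j := by exact_mod_cast not_lt.1 hjs
    have hdj : (d : ℝ) ≤ j := by exact_mod_cast not_lt.1 hjd
    have hdj' : (0 : ℝ) < d + j := by linarith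
    apply norm_affine_le (div_nonneg (by linarith) hdj'.le)
    -- the real part is decreasing in `Re z`, so its worst case is `Re z = 1`
    · rw [abs_of_nonneg (by nlinarith), div_mul_eq_mul_div, le_div_iff₀ hdj']
      nlinarith [mul_nonneg (mul_nonneg (Nat.cast_nonneg s) (sub_nonneg.2 hdj)) (sub_nonneg.2 hz)]
    · rw [abs_of_nonneg (by linarith), abs_of_nonneg hd'.le, div_mul_eq_mul_div,
        le_div_iff₀ hdj']
      nlinarith

lemma norm_hyperF_zero_pos {d n : ℕ} {z : ℂ} (hz : 0 ≤ z.re) : 0 < ‖hyperF d n 0 z‖ := by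
  refine norm_pos_iff.2 (mul_ne_zero (by simp) (prod_ne_zero_iff.2 fun j hj h => ?_))
  have hj : (1 : ℝ) ≤ j := by exact_mod_cast (mem_Icc.1 hj).1
  have hre := congrArg Complex.re h
  simp only [CharP.cast_eq_zero, sub_zero, Complex.add_re, Complex.mul_re, Complex.natCast_re,
    Complex.natCast_im, zero_mul, Complex.zero_re] at hre
  nlinarith [mul_nonneg (Nat.cast_nonneg d) hz]

lemma norm_hyperF_le {d n s : ℕ} {z : ℂ} (hz : 1 ≤ z.re) (hd : 0 < d) (hsd : s ≤ d) :
    ‖hyperF d n s z‖ ≤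
      (n.choose s * ∏ j ∈ Icc 1 (n - 1), factorBound d s j) * ‖hyperF d n 0 z‖ := by
  simp only [hyperF, norm_mul, norm_prod, Complex.norm_natCast, Nat.choose_zero_right,
    Nat.cast_one, one_mul, CharP.cast_eq_zero, sub_zero]
  rw [mul_assoc, ← prod_mul_distrib]
  gcongr with j
  exact norm_factor_le hz hd hsd

lemma prod_factorBound {s t m : ℕ} (hs : 1 ≤ s) :
    ∏ j ∈ Icc 1 (s + t + m - 1), factorBound (s + t) s j =
      ((t : ℝ) / (s + t : ℕ)) ^ t *
        ((2 * t).ascFactorial m / (2 * (s + t)).ascFactorial m : ℝ) := by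
  have hlow : ∏ j ∈ Ico 1 s, factorBound (s + t) s j = 1 :=
    prod_eq_one fun j hj => if_pos (mem_Ico.1 hj).2
  have hmid : ∏ j ∈ Ico s (s + t), factorBound (s + t) s j = ((t : ℝ) / (s + t : ℕ)) ^ t := by
    rw [prod_congr rfl fun j hj => ?_, prod_const, Nat.card_Ico, Nat.add_sub_cancel_left]
    rw [factorBound, if_neg (not_lt.2 (mem_Ico.1 hj).1), if_pos (mem_Ico.1 hj).2]
    push_cast
    ring
  have hhigh : ∏ j ∈ Ico (s + t) (s + t + m), factorBound (s + t) s j =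
      ((2 * t).ascFactorial m / (2 * (s + t)).ascFactorial m : ℝ) := by
    rw [prod_Ico_eq_prod_range, Nat.add_sub_cancel_left, Nat.ascFactorial_eq_prod_range,
      Nat.ascFactorial_eq_prod_range, Nat.cast_prod, Nat.cast_prod, ← prod_div_distrib]
    refine prod_congr rfl fun i _ => ?_
    rw [factorBound, if_neg (by omega), if_neg (by omega)]
    push_cast
    ring
  have hIcc : Icc 1 (s + t + m - 1) = Ico 1 (s + t + m) := by
    ext; simp only [mem_Icc, mem_Ico]; omega
  rw [hIcc, ← prod_Ico_consecutive _ hs (by omega : s ≤ s + t + m),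
    ← prod_Ico_consecutive _ (by omega : s ≤ s + t) (by omega : s + t ≤ s + t + m),
    hlow, hmid, hhigh, one_mul]

lemma ascFactorial_pos_of_pos {a : ℕ} (ha : 0 < a) (m : ℕ) : 0 < a.ascFactorial m :=
  (Nat.pow_pos ha).trans_le (Nat.pow_succ_le_ascFactorial a m)

lemma two_mul_pow_self_le {t : ℕ} (ht : t ≠ 0) : 2 * t ^ t ≤ (t + 1) ^ t := by
  have := pow_add_mul_le_add_pow (a := t) (b := 1) (Nat.zero_le _) (by omega) t
  rwa [Nat.cast_id, mul_one, mul_pow_sub_one ht, ← two_mul] at this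

lemma three_mul_le_sq {d m : ℤ} (hd : 4 ≤ d) (hm : 6 * d ^ 2 + 13 ≤ d + m + 16 * d) :
    3 * d * (d - 1) * (d + m) ≤ (m + 2) ^ 2 := by
  have hslope : 0 ≤ m + 6 * d ^ 2 - 17 * d + 17 - 3 * d * (d - 1) := by nlinarith
  nlinarith [mul_nonneg (sub_nonneg.2 hm) hslope,
    mul_nonneg (mul_nonneg (sub_nonneg.2 hd) (sub_nonneg.2 hd)) (sub_nonneg.2 hd)]

lemma step_factor_lt {d m t : ℕ} (hd : 4 ≤ d) (hm : 6 * d ^ 2 + 13 ≤ d + m + 16 * d)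
    (ht : 1 ≤ t) (htd : t < d) :
    3 * t * (2 * t + 1) * d * (t + m + 1) < 2 * (t + 1) * ((2 * t + m) * (2 * t + m + 1)) := by
  have hsq := three_mul_le_sq (d := d) (m := m) (by exact_mod_cast hd) (by exact_mod_cast hm)
  zify at *
  have hcoef : (3 * t * (2 * t + 1) : ℤ) < 2 * (t + 1) * (3 * (d - 1)) := by nlinarith
  calc (3 * t * (2 * t + 1) * d * (t + m + 1) : ℤ) ≤ 3 * t * (2 * t + 1) * d * (d + m) := by
        gcongr ?_ * ?_; linarith
    _ < 2 * (t + 1) * (3 * (d - 1)) * (d * (d + m)) := by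
        rw [mul_assoc]; exact mul_lt_mul_of_pos_right hcoef (by positivity)
    _ = 2 * (t + 1) * (3 * d * (d - 1) * (d + m)) := by ring
    _ ≤ 2 * (t + 1) * (m + 2) ^ 2 := by gcongr
    _ ≤ 2 * (t + 1) * ((2 * t + m) * (2 * t + m + 1)) := by gcongr; nlinarith

lemma ascFactorial_mul_add_mul_add_one (a m : ℕ) :
    a.ascFactorial m * ((a + m) * (a + m + 1)) = a * (a + 1) * (a + 2).ascFactorial m := by
  have h := (Nat.ascFactorial_mul_ascFactorial a m 2).trans
    ((Nat.add_comm m 2 ▸ Nat.ascFactorial_mul_ascFactorial a 2 m).symm)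
  simpa [Nat.ascFactorial_succ, mul_comm, mul_left_comm, mul_assoc] using h

lemma three_pow_succ_mul_descFactorial_lt {d m s t : ℕ} (hd : 4 ≤ d) (hm : 6 * d ^ 2 + 13 ≤ d + m + 16 * d)
    (hst : s + t + 1 = d) (ht : 1 ≤ t)
    (h : 3 ^ s * (d + m).descFactorial s * (t + 1) ^ (t + 1) * (2 * (t + 1)).ascFactorial m ≤
      2 ^ s * d ^ (t + 1) * (2 * d).ascFactorial m) :
    3 ^ (s + 1) * (d + m).descFactorial (s + 1) * t ^ t * (2 * t).ascFactorial m <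
      2 ^ (s + 1) * d ^ t * (2 * d).ascFactorial m := by
  set D := (d + m).descFactorial s
  set P := (2 * t + 2).ascFactorial m
  set Q := (2 * d).ascFactorial m
  set N := 3 * t * (2 * t + 1) * d * (t + m + 1)
  have hdesc : (d + m).descFactorial (s + 1) = (t + m + 1) * D := by
    rw [Nat.descFactorial_succ, show d + m - s = t + m + 1 by omega]
  have hasc := ascFactorial_mul_add_mul_add_one (2 * t) m
  rw [show 2 * t + 1 + 1 = 2 * t + 2 by ring] at hasc
  rw [show 2 * (t + 1) = 2 * t + 2 by ring] at h
  have hQ : 0 < Q := ascFactorial_pos_of_pos (by omega) m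
  refine Nat.lt_of_mul_lt_mul_right (a := 2 * ((t + 1) * ((2 * t + m) * (2 * t + m + 1)) * d)) ?_
  calc 3 ^ (s + 1) * (d + m).descFactorial (s + 1) * t ^ t * (2 * t).ascFactorial m *
        (2 * ((t + 1) * ((2 * t + m) * (2 * t + m + 1)) * d))
      = 3 ^ (s + 1) * ((t + m + 1) * D) * t ^ t *
          ((2 * t).ascFactorial m * ((2 * t + m) * (2 * t + m + 1))) * (2 * (t + 1) * d) := by
        rw [hdesc]; ring
    _ = N * (2 * t ^ t * (t + 1)) * 2 * (3 ^ s * D * P) := by rw [hasc]; ring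
    _ ≤ N * (t + 1) ^ (t + 1) * 2 * (3 ^ s * D * P) := by
        gcongr; rw [pow_succ]; exact Nat.mul_le_mul_right _ (two_mul_pow_self_le (by omega))
    _ = N * 2 * (3 ^ s * D * (t + 1) ^ (t + 1) * P) := by ring
    _ ≤ N * 2 * (2 ^ s * d ^ (t + 1) * Q) := by gcongr
    _ < 2 * (t + 1) * ((2 * t + m) * (2 * t + m + 1)) * 2 * (2 ^ s * d ^ (t + 1) * Q) := by
        gcongr
        exact step_factor_lt hd hm ht (by omega)
    _ = 2 ^ (s + 1) * d ^ t * Q * (2 * ((t + 1) * ((2 * t + m) * (2 * t + m + 1)) * d)) := by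
        ring

lemma three_pow_mul_descFactorial_le {d m : ℕ} (hd : 4 ≤ d) (hm : 6 * d ^ 2 + 13 ≤ d + m + 16 * d) :
    ∀ s t, s + t = d → 1 ≤ t →
      3 ^ s * (d + m).descFactorial s * t ^ t * (2 * t).ascFactorial m ≤
        2 ^ s * d ^ t * (2 * d).ascFactorial m
  | 0, t, hst, _ => by simp [← hst]
  | s + 1, t, hst, ht =>
    (three_pow_succ_mul_descFactorial_lt hd hm (by omega) ht (three_pow_mul_descFactorial_le hd hm s (t + 1) (by omega) (by omega))).le

lemma three_pow_mul_descFactorial_lt {d m s t : ℕ} (hd : 4 ≤ d) (hm : 6 * d ^ 2 + 13 ≤ d + m + 16 * d)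
    (hs : 1 ≤ s) (hst : s + t = d) (ht : 1 ≤ t) :
    3 ^ s * (d + m).descFactorial s * t ^ t * (2 * t).ascFactorial m <
      2 ^ s * d ^ t * (2 * d).ascFactorial m := by
  obtain ⟨s, rfl⟩ := Nat.exists_eq_add_of_le' hs
  exact three_pow_succ_mul_descFactorial_lt hd hm (by omega) ht (three_pow_mul_descFactorial_le hd hm s (t + 1) (by omega) (by omega))

lemma choose_mul_pow_mul_ascFactorial_div_lt {s t m : ℕ} (hs : 1 ≤ s) (ht : 1 ≤ t) (hd : 4 ≤ s + t)
    (hm : 6 * (s + t) ^ 2 + 13 ≤ s + t + m + 16 * (s + t)) :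
    ((s + t + m).choose s : ℝ) * ((t : ℝ) / (s + t : ℕ)) ^ t *
        ((2 * t).ascFactorial m / (2 * (s + t)).ascFactorial m : ℝ) <
      2 ^ s / (3 ^ s * s.factorial) := by
  have key := three_pow_mul_descFactorial_lt hd hm hs rfl ht
  rw [Nat.descFactorial_eq_factorial_mul_choose] at key
  have key' := (Nat.cast_lt (α := ℝ)).2 key
  push_cast at key' ⊢
  have hQ : (0 : ℝ) < (2 * (s + t)).ascFactorial m := by
    exact_mod_cast ascFactorial_pos_of_pos (by omega) m
  have hd' : (0 : ℝ) < s + t := by exact_mod_cast (by omega : 0 < s + t)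
  rw [lt_div_iff₀ (by positivity)]
  calc _ = (3 ^ s * (s.factorial * (s + t + m).choose s) * t ^ t * (2 * t).ascFactorial m : ℝ) /
        ((s + t) ^ t * (2 * (s + t)).ascFactorial m) := by
        rw [div_pow]; field_simp
    _ < 2 ^ s := by rw [div_lt_iff₀ (by positivity)]; linarith

theorem stmt_10 (d n s : ℕ) (hd : 4 ≤ d) (hn : 6 * (d : ℤ) ^ 2 - 16 * d + 13 ≤ (n : ℤ))
    (hs : 1 ≤ s) (hs' : s ≤ d - 1) (z : ℂ) (hz : 1 ≤ z.re) :
    ‖hyperF d n s z‖ / ‖hyperF d n 0 z‖ <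
      (2 : ℝ) ^ s / ((3 : ℝ) ^ s * (s.factorial : ℝ)) := by
  obtain ⟨t, rfl⟩ : ∃ t, d = s + t := ⟨d - s, by omega⟩
  have hdn : s + t ≤ n := by
    have : (4 : ℤ) ≤ s + t := by exact_mod_cast hd
    exact_mod_cast (by push_cast at hn ⊢; nlinarith : ((s + t : ℕ) : ℤ) ≤ n)
  obtain ⟨m, rfl⟩ := Nat.exists_eq_add_of_le hdn
  have hm : 6 * (s + t) ^ 2 + 13 ≤ s + t + m + 16 * (s + t) := by
    zify; push_cast at hn; linarith
  rw [div_lt_iff₀ (norm_hyperF_zero_pos (zero_le_one.trans hz))]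
  calc ‖hyperF (s + t) (s + t + m) s z‖
      ≤ ((s + t + m).choose s * ∏ j ∈ Icc 1 (s + t + m - 1), factorBound (s + t) s j) *
          ‖hyperF (s + t) (s + t + m) 0 z‖ := norm_hyperF_le hz (by omega) (by omega)
    _ < 2 ^ s / (3 ^ s * s.factorial) * ‖hyperF (s + t) (s + t + m) 0 z‖ := by
        gcongr
        · exact norm_hyperF_zero_pos (zero_le_one.trans hz)
        rw [prod_factorBound hs, ← mul_assoc]
        exact choose_mul_pow_mul_ascFactorial_div_lt hs (by omega) hd hm
end

section
/- Let d = 3 and let n ≥ 7 be an integer. Then for every real number α with 0 ≤ α ≤ n/3 and every choice of sign ε ∈ {+1, −1}, writing z = −α + ε·√2·n·i, one has |f_{n,1}(z)| / |f_{n,0}(z)| < n·(1/2)^{(n−1)/2} ≤ 7/8 and |f_{n,2}(z)| / |f_{n,0}(z)| < (n(n−1)/2)·(1/6)^{(n−1)/2} ≤ 7/72; in particular |f_{n,1}(z)| + |f_{n,2}(z)| < |f_{n,0}(z)|. (Here f_{n,0}(z) ≠ 0 since each factor 3·z + j has imaginary part ±3√2·n ≠ 0.) -/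
/-! Write `z = -α + iy` with `y² = 2n²`. The `j`-th factor of `f_{n,s}(z)` has squared modulus
`t² + (3 - s)²·2n²` with `t = j - s - (3 - s)α`, and `t² < n²` for `1 ≤ j ≤ n - 1`, `0 ≤ α ≤ n/3`.
The `j`-th factor of `f_{n,0}` has squared modulus at least `18n²`, and `k (2(3 - s)² + 1) ≤ 18`
for `(s, k) = (1, 2), (2, 6)`, so factorwise the ratio is below `1/√2` for `s = 1` and `1/√6` for
`s = 2`. Multiplying over the `n - 1` factors gives the two ratio bounds; the numerical bounds are
tight at `n = 7`. -/

open Finset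

def hyperFactor (d s j : ℕ) (z : ℂ) : ℂ := ((d : ℂ) - s) * z + j - s

lemma hyperF_eq_choose_mul_prod (d n s : ℕ) (z : ℂ) :
    hyperF d n s z = n.choose s * ∏ j ∈ Icc 1 (n - 1), hyperFactor d s j z :=
  rfl

lemma sq_norm_hyperFactor (d s j : ℕ) (z : ℂ) :
    ‖hyperFactor d s j z‖ ^ 2 =
      (((d : ℝ) - s) * z.re + j - s) ^ 2 + ((d : ℝ) - s) ^ 2 * z.im ^ 2 := by
  rw [Complex.sq_norm, Complex.normSq_apply, hyperFactor]
  simp only [Complex.sub_re, Complex.add_re, Complex.mul_re, Complex.natCast_re, Complex.sub_im,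
    Complex.natCast_im, sub_self, zero_mul, sub_zero, Complex.add_im, Complex.mul_im, add_zero]
  ring

lemma norm_hyperFactor_pos {d s : ℕ} (j : ℕ) {z : ℂ} (hs : s ≠ d) (hz : z.im ≠ 0) :
    0 < ‖hyperFactor d s j z‖ := by
  refine norm_pos_iff.2 fun h => ?_
  have him := congrArg Complex.im h
  simp [hyperFactor, sub_eq_zero, hz] at him
  exact hs (by exact_mod_cast him.symm)

lemma Finset.prod_lt_pow_card_mul_prod {ι : Type*} {s : Finset ι} (hs : s.Nonempty)
    {f g : ι → ℝ} {c : ℝ} (hf : ∀ i ∈ s, 0 < f i) (hfg : ∀ i ∈ s, f i < c * g i) :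
    ∏ i ∈ s, f i < c ^ #s * ∏ i ∈ s, g i := by
  rw [← prod_const, ← prod_mul_distrib]
  exact prod_lt_prod_of_nonempty hf hfg hs

lemma norm_hyperF_lt {d n s : ℕ} {z : ℂ} {c : ℝ} (hn : 2 ≤ n) (hsn : s ≤ n)
    (hpos : ∀ j ∈ Icc 1 (n - 1), 0 < ‖hyperFactor d s j z‖)
    (hlt : ∀ j ∈ Icc 1 (n - 1), ‖hyperFactor d s j z‖ < c * ‖hyperFactor d 0 j z‖) :
    ‖hyperF d n s z‖ < n.choose s * c ^ (n - 1) * ‖hyperF d n 0 z‖ := by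
  have hcard : #(Icc 1 (n - 1)) = n - 1 := by simp
  simp only [hyperF_eq_choose_mul_prod, norm_mul, norm_prod, Complex.norm_natCast,
    Nat.choose_zero_right, Nat.cast_one, one_mul, mul_assoc]
  gcongr
  · exact_mod_cast Nat.choose_pos hsn
  · simpa [hcard] using prod_lt_pow_card_mul_prod (nonempty_Icc.2 (by omega)) hpos hlt

lemma sq_mul_neg_add_sub_lt_sq {n j s α : ℝ} (hn : 3 ≤ n) (hj1 : 1 ≤ j) (hjn : j ≤ n - 1)
    (hs0 : 0 ≤ s) (hs2 : s ≤ 2) (hα0 : 0 ≤ α) (hα1 : α ≤ n / 3) :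
    ((3 - s) * -α + j - s) ^ 2 < n ^ 2 := by
  have hle : (3 - s) * α ≤ (3 - s) * (n / 3) := mul_le_mul_of_nonneg_left hα1 (by linarith)
  have hnonneg : 0 ≤ (3 - s) * α := mul_nonneg (by linarith) hα0
  apply sq_lt_sq' <;> nlinarith

lemma norm_hyperFactor_lt {n s j : ℕ} {z : ℂ} {α k : ℝ} (hre : z.re = -α)
    (him : z.im ^ 2 = 2 * n ^ 2) (hα0 : 0 ≤ α) (hα1 : α ≤ n / 3) (hn : 3 ≤ n)
    (hj : j ∈ Icc 1 (n - 1)) (hs : s ≤ 2) (hk : 0 < k)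
    (hks : k * (2 * (3 - s) ^ 2 + 1) ≤ 18) :
    ‖hyperFactor 3 s j z‖ < √(1 / k) * ‖hyperFactor 3 0 j z‖ := by
  obtain ⟨hj1, hjn⟩ := mem_Icc.1 hj
  have ht := sq_mul_neg_add_sub_lt_sq (n := n) (j := j) (s := s) (α := α) (by exact_mod_cast hn)
    (by exact_mod_cast hj1) (by rw [le_sub_iff_add_le]; exact_mod_cast (by omega : j + 1 ≤ n))
    s.cast_nonneg (by exact_mod_cast hs) hα0 hα1
  refine lt_of_pow_lt_pow_left₀ 2 (by positivity) ?_
  rw [mul_pow, Real.sq_sqrt (by positivity), sq_norm_hyperFactor, sq_norm_hyperFactor, hre, him,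
    div_mul_eq_mul_div, one_mul, lt_div_iff₀ hk]
  push_cast
  nlinarith [mul_lt_mul_of_pos_left ht hk, mul_le_mul_of_nonneg_right hks (sq_nonneg (n : ℝ)),
    sq_nonneg (3 * -α + j)]

lemma rpow_sub_one_div_two {x : ℝ} (hx : 0 ≤ x) {n : ℕ} (hn : 1 ≤ n) :
    x ^ (((n : ℝ) - 1) / 2) = √x ^ (n - 1) := by
  rw [Real.sqrt_eq_rpow, ← Real.rpow_natCast, ← Real.rpow_mul hx, Nat.cast_sub hn]
  ring_nf

lemma mul_sqrt_pow_le {a b r : ℝ} (m : ℕ) (hb : 0 ≤ b) (hr : 0 ≤ r) (h : a ^ 2 * r ^ m ≤ b ^ 2) :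
    a * √r ^ m ≤ b := by
  refine le_of_pow_le_pow_left₀ two_ne_zero hb ?_
  rwa [mul_pow, ← pow_mul, mul_comm m 2, pow_mul, Real.sq_sqrt hr]

lemma sq_succ_le_two_pow {m : ℕ} (hm : 6 ≤ m) : 64 * (m + 1) ^ 2 ≤ 49 * 2 ^ m := by
  induction m, hm using Nat.le_induction with
  | base => norm_num
  | succ m hm ih => rw [pow_succ 2 m]; nlinarith

lemma sq_succ_mul_le_six_pow {m : ℕ} (hm : 6 ≤ m) : 1296 * ((m + 1) * m) ^ 2 ≤ 49 * 6 ^ m := by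
  induction m, hm using Nat.le_induction with
  | base => norm_num
  | succ m hm ih => rw [pow_succ 6 m]; nlinarith

lemma mul_sqrt_half_pow_le {n : ℕ} (hn : 7 ≤ n) : (n : ℝ) * √(1 / 2) ^ (n - 1) ≤ 7 / 8 := by
  refine mul_sqrt_pow_le _ (by norm_num) (by norm_num) ?_
  have h : (64 * n ^ 2 : ℝ) ≤ 49 * 2 ^ (n - 1) := by
    obtain ⟨m, rfl⟩ : ∃ m, n = m + 1 := ⟨n - 1, by omega⟩
    simpa using (Nat.cast_le (α := ℝ)).2 (sq_succ_le_two_pow (m := m) (by omega))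
  rw [one_div_pow, mul_one_div, div_le_iff₀ (by positivity)]
  linarith

lemma choose_two_mul_sqrt_sixth_pow_le {n : ℕ} (hn : 7 ≤ n) :
    (n * ((n : ℝ) - 1) / 2) * √(1 / 6) ^ (n - 1) ≤ 7 / 72 := by
  refine mul_sqrt_pow_le _ (by norm_num) (by norm_num) ?_
  have h : (1296 * (n * ((n : ℝ) - 1)) ^ 2 : ℝ) ≤ 49 * 6 ^ (n - 1) := by
    obtain ⟨m, rfl⟩ : ∃ m, n = m + 1 := ⟨n - 1, by omega⟩
    simpa using (Nat.cast_le (α := ℝ)).2 (sq_succ_mul_le_six_pow (m := m) (by omega))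
  rw [one_div_pow, mul_one_div, div_le_iff₀ (by positivity)]
  nlinarith

theorem stmt_17 (n : ℕ) (hn : 7 ≤ n) (α : ℝ) (hα0 : 0 ≤ α) (hα1 : α ≤ (n : ℝ) / 3)
    (ε : ℝ) (hε : ε = 1 ∨ ε = -1) :
    ‖hyperF 3 n 1 (-(α : ℂ) + (ε : ℂ) * (Real.sqrt 2 : ℂ) * n * Complex.I)‖ /
          ‖hyperF 3 n 0 (-(α : ℂ) + (ε : ℂ) * (Real.sqrt 2 : ℂ) * n * Complex.I)‖ <
        (n : ℝ) * (1 / 2 : ℝ) ^ (((n : ℝ) - 1) / 2) ∧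
      (n : ℝ) * (1 / 2 : ℝ) ^ (((n : ℝ) - 1) / 2) ≤ 7 / 8 ∧
      ‖hyperF 3 n 2 (-(α : ℂ) + (ε : ℂ) * (Real.sqrt 2 : ℂ) * n * Complex.I)‖ /
          ‖hyperF 3 n 0 (-(α : ℂ) + (ε : ℂ) * (Real.sqrt 2 : ℂ) * n * Complex.I)‖ <
        ((n : ℝ) * ((n : ℝ) - 1) / 2) * (1 / 6 : ℝ) ^ (((n : ℝ) - 1) / 2) ∧
      ((n : ℝ) * ((n : ℝ) - 1) / 2) * (1 / 6 : ℝ) ^ (((n : ℝ) - 1) / 2) ≤ 7 / 72 ∧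
      ‖hyperF 3 n 1 (-(α : ℂ) + (ε : ℂ) * (Real.sqrt 2 : ℂ) * n * Complex.I)‖ +
          ‖hyperF 3 n 2 (-(α : ℂ) + (ε : ℂ) * (Real.sqrt 2 : ℂ) * n * Complex.I)‖ <
        ‖hyperF 3 n 0 (-(α : ℂ) + (ε : ℂ) * (Real.sqrt 2 : ℂ) * n * Complex.I)‖ := by
  set z : ℂ := -(α : ℂ) + (ε : ℂ) * (Real.sqrt 2 : ℂ) * n * Complex.I with hz
  have hre : z.re = -α := by simp [hz]
  have him : z.im ^ 2 = 2 * n ^ 2 := by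
    have hε2 : ε ^ 2 = 1 := by rcases hε with rfl | rfl <;> norm_num
    simp [hz, mul_pow, hε2]
  have hzim : z.im ≠ 0 := fun h => by simp [h] at him; omega
  have hpos (s : ℕ) (hs : s ≠ 3) : ∀ j ∈ Icc 1 (n - 1), 0 < ‖hyperFactor 3 s j z‖ :=
    fun j _ => norm_hyperFactor_pos j hs hzim
  have h1 : ‖hyperF 3 n 1 z‖ < n * √(1 / 2) ^ (n - 1) * ‖hyperF 3 n 0 z‖ := by
    simpa using norm_hyperF_lt (by omega) (by omega) (hpos 1 (by norm_num))
      fun j hj => norm_hyperFactor_lt (k := 2) hre him hα0 hα1 (by omega) hj (by norm_num)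
        (by norm_num) (by norm_num)
  have h2 : ‖hyperF 3 n 2 z‖ < n * ((n : ℝ) - 1) / 2 * √(1 / 6) ^ (n - 1) * ‖hyperF 3 n 0 z‖ := by
    simpa [Nat.cast_choose_two] using norm_hyperF_lt (by omega) (by omega) (hpos 2 (by norm_num))
      fun j hj => norm_hyperFactor_lt (k := 6) hre him hα0 hα1 (by omega) hj (by norm_num)
        (by norm_num) (by norm_num)
  have h0 : 0 < ‖hyperF 3 n 0 z‖ :=
    pos_of_mul_pos_right ((norm_nonneg _).trans_lt h1) (by positivity)
  have b1 := mul_sqrt_half_pow_le hn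
  have b2 := choose_two_mul_sqrt_sixth_pow_le hn
  rw [rpow_sub_one_div_two (by norm_num) (by omega), rpow_sub_one_div_two (by norm_num) (by omega),
    div_lt_iff₀ h0, div_lt_iff₀ h0]
  refine ⟨h1, b1, h2, b2, ?_⟩
  linarith [mul_le_mul_of_nonneg_right b1 h0.le, mul_le_mul_of_nonneg_right b2 h0.le]
end
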